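/- Explicit spanning set for the kernel of t_a^n (the paper's Corollary 'kernelunibasis': the kernel of t_α^n equals Σ_{k=0}^n ℂ[[Λ^{1/2}]]_{α^{1/2}=1} · y_α^{(k)} + ℂ[[Λ^{1/2}]]_{α^{1/2}=1} · d_{α,+} · y_α^{(k)}'): let a ∈ G with a ≠ 0, let n ≥ 1, and let S ⊆ G be a transversal for the subgroup ℤ • a (every coset x + ℤ • a meets S in exactly one point). Define c'_k : ℤ → ℤ by c'_k m := c_k (m − 1) + c_k (m + 1). Then for f : G → ℂ one has t_a^n f = 0 if and only if there exist functions g_1, …, g_n, h_1, …, h_n : G → ℂ, each vanishing outside S (hence a-finite), such that f = Σ_{k=1}^{n} (g_k ⋆_a c_k + h_k ⋆_a c'_k). -/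

import Mathlib

/-!
Restricted to a coset `y + ℤ • a`, the operator `ta a` becomes the difference operator
`D u m = u (m + 1) - u (m - 1)` on sequences `ℤ → ℂ`, and convolution with a function supported on
the transversal `S` becomes a scalar multiple of the coefficient sequence. So the theorem reduces
to describing `ker D^n`. The sequences `c_k` and `c'_k` satisfy `D c_(k+1) = c_k`,
`D c'_(k+1) = c'_k` and `c_0 = c'_0 = 0`, so they lie in `ker D^n` for `k ≤ n`; conversely
`ker D` consists of the 2-periodic sequences, spanned by `c_1` (the indicator of the odd integers)
and `c'_1` (twice that of the even ones), and induction on `n` lifts this to `ker D^n`.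
-/

/-- The lattice `ℤ^d`, modeling the lattice `Λ^{1/2}` of half-weights. -/
abbrev Glat (d : ℕ) : Type := Fin d → ℤ

/-- Multiplication by `d_{α,-} = α^{-1/2} - α^{1/2}` on unbounded Laurent series,
modeled as the operator `(t_a f) x = f (x + a) - f (x - a)`. -/
def ta {d : ℕ} (a : Glat d) (f : Glat d → ℂ) : Glat d → ℂ :=
  fun x => f (x + a) - f (x - a)

/-- The coefficient sequence `c_n` of the series `y_α^{(n)}` in powers of `α^{1/2}`:
for `n ≥ 1`, `c_n (2k+n) = choose (n-1+k) (n-1)` and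
`c_n (-(2k+n)) = (-1)^{n+1} * choose (n-1+k) (n-1)` for `k ∈ ℕ`, `0` elsewhere; `c_0 = 0`. -/
def cseq (n : ℕ) (m : ℤ) : ℤ :=
  if n = 0 then 0
  else if (n : ℤ) ≤ m ∧ (m - (n : ℤ)) % 2 = 0 then
    ((n - 1 + ((m - (n : ℤ)) / 2).toNat).choose (n - 1) : ℤ)
  else if m ≤ -(n : ℤ) ∧ (m + (n : ℤ)) % 2 = 0 then
    (-1) ^ (n + 1) * ((n - 1 + ((-m - (n : ℤ)) / 2).toNat).choose (n - 1) : ℤ)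
  else 0

/-- The coefficient sequence `c'_k` of `d_{α,+} · y_α^{(k)}`: `c'_k m = c_k (m-1) + c_k (m+1)`. -/
def cseq' (k : ℕ) (m : ℤ) : ℤ := cseq k (m - 1) + cseq k (m + 1)

/-- Convolution `(g ⋆_a c) x = Σ_{m ∈ ℤ} g (x - m•a) * c m`; for `g` vanishing outside a
transversal of `ℤ•a` (hence `a`-finite) only finitely many terms are nonzero. -/
noncomputable def conv {d : ℕ} (a : Glat d) (g : Glat d → ℂ) (c : ℤ → ℤ) : Glat d → ℂ :=
  fun x => ∑' m : ℤ, g (x - m • a) * (c m : ℂ)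

lemma Module.End.pow_apply_eq_zero_of_le {R M : Type*} [Semiring R] [AddCommMonoid M] [Module R M]
    {f : Module.End R M} {s : ℕ → M} (hs₀ : s 0 = 0) (hs : ∀ k, f (s (k + 1)) = s k) {k n : ℕ}
    (hkn : k ≤ n) : (f ^ n) (s k) = 0 := by
  induction n generalizing k with
  | zero => simp [Nat.le_zero.mp hkn, hs₀]
  | succ n ih =>
    rcases k with _ | k
    · simp [hs₀]
    · rw [pow_succ, Module.End.mul_apply, hs, ih (by omega)]

/-- The coefficient of `x ^ m` in `x ^ n (1 - x ^ 2) ^ (-n)`; `cseq n` is its antisymmetrization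
(`cseq_eq_halfBinom`), so `Nat.multichoose_succ_succ` yields the Pascal relation `cseq_succ_pascal`. -/
def halfBinom (n : ℕ) (m : ℤ) : ℤ :=
  if (n : ℤ) ≤ m ∧ (m - n) % 2 = 0 then (n.multichoose ((m - n) / 2).toNat : ℤ) else 0

lemma halfBinom_add_two_mul (n t : ℕ) : halfBinom n (n + 2 * t) = n.multichoose t := by
  rw [halfBinom, if_pos (by omega)]
  congr
  omega

lemma halfBinom_of_forall_ne {n : ℕ} {m : ℤ} (h : ∀ t : ℕ, m ≠ n + 2 * t) : halfBinom n m = 0 :=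
  if_neg fun ⟨h₁, h₂⟩ => h ((m - n) / 2).toNat (by omega)

lemma halfBinom_succ_pascal (k : ℕ) (m : ℤ) :
    halfBinom (k + 1) (m + 1) - halfBinom (k + 1) (m - 1) = halfBinom k m := by
  by_cases hm : ∃ t : ℕ, m = k + 2 * t
  · obtain ⟨t, rfl⟩ := hm
    rw [show (k : ℤ) + 2 * t + 1 = (k + 1 : ℕ) + 2 * t by push_cast; ring, halfBinom_add_two_mul,
      halfBinom_add_two_mul]
    cases t with
    | zero =>
      rw [halfBinom_of_forall_ne (by omega)]
      simp
    | succ t =>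
      rw [show (k : ℤ) + 2 * (t + 1 : ℕ) - 1 = (k + 1 : ℕ) + 2 * t by push_cast; ring,
        halfBinom_add_two_mul, Nat.multichoose_succ_succ]
      push_cast; ring
  · push Not at hm
    rw [halfBinom_of_forall_ne fun t => by have := hm t; push_cast at *; omega,
      halfBinom_of_forall_ne fun t => by have := hm (t + 1); push_cast at *; omega,
      halfBinom_of_forall_ne hm, sub_zero]

lemma halfBinom_zero (m : ℤ) : halfBinom 0 m = if m = 0 then 1 else 0 := by
  by_cases hm : ∃ t : ℕ, m = 2 * t
  · obtain ⟨_ | t, rfl⟩ := hm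
    · simpa using halfBinom_add_two_mul 0 0
    · rw [if_neg (by omega)]
      simpa using halfBinom_add_two_mul 0 (t + 1)
  · push Not at hm
    rw [halfBinom_of_forall_ne (by simpa using hm), if_neg (by simpa using hm 0)]

lemma Nat.multichoose_succ_eq_choose (n t : ℕ) : (n + 1).multichoose t = (n + t).choose n := by
  rw [Nat.multichoose_eq, Nat.add_right_comm, Nat.add_sub_cancel, Nat.choose_symm_add]

lemma cseq_eq_halfBinom (n : ℕ) (m : ℤ) :
    cseq n m = halfBinom n m - (-1) ^ n * halfBinom n (-m) := by
  rcases n with _ | n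
  · simp only [cseq, halfBinom_zero]
    split_ifs <;> simp_all
  · simp only [cseq, halfBinom, Nat.multichoose_succ_eq_choose, Nat.add_sub_cancel]
    split_ifs <;> first | omega | simp_all [pow_succ]

lemma cseq_succ_pascal (k : ℕ) (m : ℤ) :
    cseq (k + 1) (m + 1) - cseq (k + 1) (m - 1) = cseq k m := by
  simp only [cseq_eq_halfBinom, neg_add', neg_sub', sub_neg_eq_add]
  rw [← halfBinom_succ_pascal k m, ← halfBinom_succ_pascal k (-m), pow_succ]
  ring_nf

lemma cseq'_succ_pascal (k : ℕ) (m : ℤ) :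
    cseq' (k + 1) (m + 1) - cseq' (k + 1) (m - 1) = cseq' k m := by
  have h₁ := cseq_succ_pascal k (m - 1)
  have h₂ := cseq_succ_pascal k (m + 1)
  simp only [cseq', sub_add_cancel, add_sub_cancel_right] at h₁ h₂ ⊢
  linear_combination h₁ + h₂

lemma cseq_one (m : ℤ) : cseq 1 m = if m % 2 = 0 then 0 else 1 := by
  simp only [cseq]
  split_ifs <;> simp_all <;> omega

lemma cseq'_one (m : ℤ) : cseq' 1 m = if m % 2 = 0 then 2 else 0 := by
  simp only [cseq', cseq_one]
  split_ifs <;> omega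

section shiftDiff

variable (R : Type*) [Ring R]

def shiftDiff : Module.End R (ℤ → R) :=
  LinearMap.funLeft R R (· + 1) - LinearMap.funLeft R R (· - 1)

variable {R}

@[simp]
lemma shiftDiff_apply (u : ℤ → R) (m : ℤ) : shiftDiff R u m = u (m + 1) - u (m - 1) := rfl

lemma shiftDiff_cseq_succ (k : ℕ) :
    shiftDiff R (fun m => (cseq (k + 1) m : R)) = fun m => (cseq k m : R) := by
  ext m
  simp [← cseq_succ_pascal k m]

lemma shiftDiff_cseq'_succ (k : ℕ) :
    shiftDiff R (fun m => (cseq' (k + 1) m : R)) = fun m => (cseq' k m : R) := by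
  ext m
  simp [← cseq'_succ_pascal k m]

lemma shiftDiff_pow_cseq_of_le {k n : ℕ} (hkn : k ≤ n) :
    (shiftDiff R ^ n) (fun m => (cseq k m : R)) = 0 :=
  Module.End.pow_apply_eq_zero_of_le (s := fun k m => (cseq k m : R))
    (by ext; simp [cseq]) shiftDiff_cseq_succ hkn

lemma shiftDiff_pow_cseq'_of_le {k n : ℕ} (hkn : k ≤ n) :
    (shiftDiff R ^ n) (fun m => (cseq' k m : R)) = 0 :=
  Module.End.pow_apply_eq_zero_of_le (s := fun k m => (cseq' k m : R))
    (by ext; simp [cseq', cseq]) shiftDiff_cseq'_succ hkn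

end shiftDiff

section kernel

variable {K : Type*} [Field K] [NeZero (2 : K)]

lemma eq_of_shiftDiff_eq_zero {u : ℤ → K} (h : shiftDiff K u = 0) :
    u = u 1 • (fun m => (cseq 1 m : K)) + (u 0 / 2) • (fun m => (cseq' 1 m : K)) := by
  have hper : Function.Periodic u 2 := fun m => by
    simpa [sub_eq_zero, add_assoc, one_add_one_eq_two] using congrFun h (m + 1)
  ext m
  rw [← hper.sub_int_mul_eq (m / 2), Int.cast_id, mul_comm, ← Int.emod_def]
  rcases Int.emod_two_eq_zero_or_one m with h₂ | h₂ <;>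
    simp only [h₂, Pi.add_apply, Pi.smul_apply, smul_eq_mul, cseq_one, cseq'_one] <;>
    simp [div_mul_cancel₀ _ (two_ne_zero (α := K))]

theorem shiftDiff_pow_eq_zero_iff (n : ℕ) (u : ℤ → K) :
    (shiftDiff K ^ n) u = 0 ↔ ∃ b c : Fin n → K,
      u = ∑ k : Fin n,
        (b k • (fun m => (cseq (k + 1) m : K)) + c k • (fun m => (cseq' (k + 1) m : K))) := by
  refine ⟨fun h => ?_, ?_⟩
  · induction n generalizing u with
    | zero => exact ⟨0, 0, by simpa using h⟩
    | succ n ih =>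
      rw [pow_succ, Module.End.mul_apply] at h
      obtain ⟨b, c, hbc⟩ := ih (shiftDiff K u) h
      -- By the Pascal relations, `w` is a preimage of `shiftDiff K u` under `shiftDiff K`.
      set w := ∑ k : Fin n,
        (b k • (fun m => (cseq (k + 2) m : K)) + c k • (fun m => (cseq' (k + 2) m : K))) with hw
      have hw_sub : shiftDiff K (u - w) = 0 := by
        simp [hw, hbc, map_sum, shiftDiff_cseq_succ, shiftDiff_cseq'_succ]
      refine ⟨Fin.cons ((u - w) 1) b, Fin.cons ((u - w) 0 / 2) c, ?_⟩
      rw [Fin.sum_univ_succ]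
      simp only [Fin.cons_zero, Fin.cons_succ, Fin.val_zero, Fin.val_succ]
      rw [← eq_of_shiftDiff_eq_zero hw_sub]
      abel
  · rintro ⟨b, c, rfl⟩
    simp [map_sum, shiftDiff_pow_cseq_of_le, shiftDiff_pow_cseq'_of_le]

end kernel

section transversal

variable {G : Type*} [AddCommGroup G] {a : G} {S : Set G}

lemma exists_mem_eq_add_zsmul (hS : ∀ x : G, ∃! y, y ∈ S ∧ ∃ m : ℤ, y = x + m • a) (x : G) :
    ∃ y ∈ S, ∃ j : ℤ, x = y + j • a := by
  obtain ⟨y, ⟨hy, m, rfl⟩, -⟩ := hS x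
  exact ⟨_, hy, -m, by rw [neg_smul]; abel⟩

lemma eq_and_eq_of_add_zsmul_eq (hS : ∀ x : G, ∃! y, y ∈ S ∧ ∃ m : ℤ, y = x + m • a)
    (ha : Function.Injective fun m : ℤ => m • a) {y y' : G} (hy : y ∈ S) (hy' : y' ∈ S)
    {j j' : ℤ} (h : y + j • a = y' + j' • a) : y = y' ∧ j = j' := by
  have hyy' : y = y' := (hS (y + j • a)).unique ⟨hy, -j, by rw [neg_smul]; abel⟩
    ⟨hy', -j', by rw [h, neg_smul]; abel⟩
  subst hyy'
  exact ⟨rfl, ha (add_left_cancel h)⟩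

variable (R : Type*) [Semiring R]

def lineRestrict (a y : G) : (G → R) →ₗ[R] (ℤ → R) :=
  LinearMap.funLeft R R fun j : ℤ => y + j • a

@[simp]
lemma lineRestrict_apply (a y : G) (f : G → R) (j : ℤ) : lineRestrict R a y f j = f (y + j • a) :=
  rfl

variable {R}

lemma funext_iff_lineRestrict (hS : ∀ x : G, ∃! y, y ∈ S ∧ ∃ m : ℤ, y = x + m • a)
    {f₁ f₂ : G → R} : f₁ = f₂ ↔ ∀ y ∈ S, lineRestrict R a y f₁ = lineRestrict R a y f₂ := by
  refine ⟨fun h _ _ => h ▸ rfl, fun h => funext fun x => ?_⟩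
  obtain ⟨y, hy, j, rfl⟩ := exists_mem_eq_add_zsmul hS x
  exact congrFun (h y hy) j

end transversal

section lattice

variable {d : ℕ} {a : Glat d}

lemma lineRestrict_iterate_ta (n : ℕ) (y : Glat d) (f : Glat d → ℂ) :
    lineRestrict ℂ a y ((ta a)^[n] f) = (shiftDiff ℂ ^ n) (lineRestrict ℂ a y f) := by
  have hsemiconj : Function.Semiconj (lineRestrict ℂ a y) (ta a) (shiftDiff ℂ) := fun f => by
    ext m
    simp only [lineRestrict_apply, ta, shiftDiff_apply, add_smul, sub_smul, one_smul, add_assoc,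
      add_sub_assoc]
  rw [Module.End.coe_pow]
  exact hsemiconj.iterate_right n f

lemma lineRestrict_conv {S : Set (Glat d)} (hS : ∀ x : Glat d, ∃! y, y ∈ S ∧ ∃ m : ℤ, y = x + m • a)
    (ha : a ≠ 0) {g : Glat d → ℂ} (hg : ∀ x ∉ S, g x = 0) (c : ℤ → ℤ) {y : Glat d} (hy : y ∈ S) :
    lineRestrict ℂ a y (conv a g c) = g y • fun j => (c j : ℂ) := by
  ext j
  rw [lineRestrict_apply, conv, tsum_eq_single j fun m hm => ?_, add_sub_cancel_right]
  · rfl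
  rw [show y + j • a - m • a = y + (j - m) • a by rw [sub_smul]; abel]
  by_cases hmem : y + (j - m) • a ∈ S
  · have hjm := (eq_and_eq_of_add_zsmul_eq hS (smul_left_injective ℤ ha) hy hmem
      (j := j - m) (j' := 0) (by rw [zero_smul, add_zero])).2
    exact absurd (sub_eq_zero.mp hjm).symm hm
  · rw [hg _ hmem, zero_mul]

end lattice

theorem kernel_of_ta_pow_explicit_general {d : ℕ} (a : Glat d) (ha : a ≠ 0)
    (n : ℕ) (S : Set (Glat d))
    (hS : ∀ x : Glat d, ∃! y, y ∈ S ∧ ∃ m : ℤ, y = x + m • a)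
    (f : Glat d → ℂ) :
    (ta a)^[n] f = 0 ↔
      ∃ g h : Fin n → (Glat d → ℂ),
        (∀ k, ∀ x ∉ S, g k x = 0) ∧ (∀ k, ∀ x ∉ S, h k x = 0) ∧
        f = ∑ k : Fin n,
          (conv a (g k) (cseq ((k : ℕ) + 1)) + conv a (h k) (cseq' ((k : ℕ) + 1))) := by
  have hker : (ta a)^[n] f = 0 ↔ ∀ y ∈ S, (shiftDiff ℂ ^ n) (lineRestrict ℂ a y f) = 0 := by
    simp only [funext_iff_lineRestrict hS, lineRestrict_iterate_ta, map_zero]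
  simp only [hker, shiftDiff_pow_eq_zero_iff]
  constructor
  · intro h
    choose! b c hbc using h
    have hsupp {v : Glat d → ℂ} : ∀ x ∉ S, S.indicator v x = 0 :=
      fun x hx => Set.indicator_of_notMem hx v
    refine ⟨fun k => S.indicator (b · k), fun k => S.indicator (c · k), fun k => hsupp,
      fun k => hsupp, (funext_iff_lineRestrict hS).2 fun y hy => ?_⟩
    simp only [map_sum, map_add, lineRestrict_conv hS ha hsupp _ hy, Set.indicator_of_mem hy]
    exact hbc y hy
  · rintro ⟨g, h, hg, hh, rfl⟩ y hy
    refine ⟨fun k => g k y, fun k => h k y, ?_⟩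
    simp only [map_sum, map_add, lineRestrict_conv hS ha (hg _) _ hy,
      lineRestrict_conv hS ha (hh _) _ hy]

/-- Explicit spanning set for the kernel of `t_a^n`: it equals
`Σ_{k=1}^n ℂ[[Λ^{1/2}]]_{α^{1/2}=1} · y_α^{(k)} + ℂ[[Λ^{1/2}]]_{α^{1/2}=1} · d_{α,+} · y_α^{(k)}`,
where `S` is a transversal for the subgroup `ℤ • a`. -/
theorem kernel_of_ta_pow_explicit {d : ℕ} (hd : 1 ≤ d) (a : Glat d) (ha : a ≠ 0)
    (n : ℕ) (hn : 1 ≤ n) (S : Set (Glat d))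
    (hS : ∀ x : Glat d, ∃! y, y ∈ S ∧ ∃ m : ℤ, y = x + m • a)
    (f : Glat d → ℂ) :
    (ta a)^[n] f = 0 ↔
      ∃ g h : Fin n → (Glat d → ℂ),
        (∀ k, ∀ x ∉ S, g k x = 0) ∧ (∀ k, ∀ x ∉ S, h k x = 0) ∧
        f = ∑ k : Fin n,
          (conv a (g k) (cseq ((k : ℕ) + 1)) + conv a (h k) (cseq' ((k : ℕ) + 1))) :=
  kernel_of_ta_pow_explicit_general a ha n S hS f
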